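/- A k-regular graph of girth g ≥ 2r with k ≥ 2 has at least 2·∑_{i=0}^{r−1}(k−1)^i vertices. -/

import Mathlib

/-!
Grow a tree from an edge `uv`: its `i`-th level on the side of `u` is the set of vertices at
distance `i` from `u` and `i + 1` from `v`. Two paths with the same ends whose lengths add up to
less than the girth coincide. Below level `r` this rules out edges inside a level and leaves every
vertex at most one neighbour closer to `u` (or to `v`). So each vertex of level `i` has at least
`k - 1` neighbours in level `i + 1` and is their only neighbour in level `i`, whence level `i` has
at least `(k - 1)^i` vertices. The levels on the two sides are pairwise disjoint.
-/

open Finset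

namespace SimpleGraph

variable {V : Type*} {G : SimpleGraph V} {u v x y y' : V}

theorem Walk.IsPath.eq_of_length_add_length_lt_egirth {p q : G.Walk u v} (hp : p.IsPath)
    (hq : q.IsPath) (h : ((p.length + q.length : ℕ) : ℕ∞) < G.egirth) : p = q := by
  by_contra hne
  obtain ⟨_, -, -, c, hc, hlen⟩ := hp.exists_isCycle_length_le_add_of_ne hq hne
  exact (egirth_le_length hc).not_gt (lt_of_le_of_lt (by exact_mod_cast hlen) h)

theorem Walk.dist_lt_length_of_mem_support {p : G.Walk u v} (hx : x ∈ p.support) (hxv : x ≠ v) :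
    G.dist u x < p.length := by
  classical
  exact (dist_le _).trans_lt (p.length_takeUntil_lt_length hx hxv)

theorem exists_isPath_concat_of_dist_le (hy : G.Reachable u y) (hyx : G.Adj y x)
    (h : G.dist u y ≤ G.dist u x) :
    ∃ p : G.Walk u y, p.length = G.dist u y ∧ (p.concat hyx).IsPath := by
  obtain ⟨p, hp, hlen⟩ := hy.exists_path_of_dist
  refine ⟨p, hlen, hp.concat (fun hx => ?_) hyx⟩
  have := Walk.dist_lt_length_of_mem_support hx hyx.ne'
  omega

theorem Adj.dist_ne_of_lt_egirth (hxy : G.Adj x y) (hx : G.Reachable u x)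
    (hg : ((2 * G.dist u x + 1 : ℕ) : ℕ∞) < G.egirth) : G.dist u y ≠ G.dist u x := by
  intro hd
  obtain ⟨p, hp, hplen⟩ := hx.exists_path_of_dist
  obtain ⟨q, hqlen, hq⟩ :=
    exists_isPath_concat_of_dist_le (hx.trans hxy.reachable) hxy.symm hd.le
  have hpq := hp.eq_of_length_add_length_lt_egirth hq (by
    rw [Walk.length_concat, hplen, hqlen, hd]
    convert hg using 2
    ring)
  have := congrArg Walk.length hpq
  rw [Walk.length_concat] at this
  omega

theorem eq_of_adj_of_dist_lt_of_lt_egirth (hyx : G.Adj y x) (hy'x : G.Adj y' x)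
    (hy : G.dist u y < G.dist u x) (hy' : G.dist u y' < G.dist u x)
    (hg : ((2 * G.dist u x : ℕ) : ℕ∞) < G.egirth) : y = y' := by
  have hux : G.Reachable u x := Reachable.of_dist_ne_zero (by omega)
  obtain ⟨p, hplen, hp⟩ :=
    exists_isPath_concat_of_dist_le (hux.trans hyx.reachable.symm) hyx hy.le
  obtain ⟨q, hqlen, hq⟩ :=
    exists_isPath_concat_of_dist_le (hux.trans hy'x.reachable.symm) hy'x hy'.le
  have hpq := hp.eq_of_length_add_length_lt_egirth hq (lt_of_le_of_lt (by
    rw [Walk.length_concat, Walk.length_concat, hplen, hqlen]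
    exact_mod_cast (by omega)) hg)
  exact (Walk.concat_inj hpq).1

variable [Fintype V]

noncomputable def edgeLayer (G : SimpleGraph V) (u v : V) (i : ℕ) : Finset V :=
  univ.filter fun x => G.dist u x = i ∧ G.dist v x = i + 1

@[simp]
theorem mem_edgeLayer {i : ℕ} :
    x ∈ G.edgeLayer u v i ↔ G.dist u x = i ∧ G.dist v x = i + 1 := by
  simp [edgeLayer]

theorem edgeLayer_zero (huv : G.Adj u v) : G.edgeLayer u v 0 = {u} := by
  ext x
  simp only [mem_edgeLayer, mem_singleton, zero_add]
  constructor
  · rintro ⟨hux, hvx⟩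
    have hreach : G.Reachable u x := huv.reachable.trans (Reachable.of_dist_ne_zero (by omega))
    exact (hreach.dist_eq_zero_iff.mp hux).symm
  · rintro rfl
    exact ⟨dist_self, dist_eq_one_iff_adj.mpr huv.symm⟩

theorem disjoint_edgeLayer_swap (i j : ℕ) :
    Disjoint (G.edgeLayer u v i) (G.edgeLayer v u j) := by
  rw [Finset.disjoint_left]
  intro x hx hx'
  simp only [mem_edgeLayer] at hx hx'
  omega

theorem disjoint_edgeLayer_union_of_ne [DecidableEq V] {i j : ℕ} (hij : i ≠ j) :
    Disjoint (G.edgeLayer u v i ∪ G.edgeLayer v u i)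
      (G.edgeLayer u v j ∪ G.edgeLayer v u j) := by
  rw [Finset.disjoint_left]
  intro x hx hx'
  simp only [mem_union, mem_edgeLayer] at hx hx'
  omega

theorem mem_edgeLayer_succ_of_adj {i : ℕ} (huv : G.Adj u v) (hx : x ∈ G.edgeLayer u v i)
    (hxy : G.Adj x y) (hv : G.dist v x ≤ G.dist v y)
    (hg : ((2 * i + 3 : ℕ) : ℕ∞) < G.egirth) : y ∈ G.edgeLayer u v (i + 1) := by
  rw [mem_edgeLayer] at hx ⊢
  obtain ⟨hux, hvx⟩ := hx
  have hvy_ne : G.dist v y ≠ G.dist v x :=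
    hxy.dist_ne_of_lt_egirth (Reachable.of_dist_ne_zero (by omega)) (by rwa [hvx])
  have hvy : G.dist v y = i + 2 := by
    rcases hxy.diff_dist_adj (u := v) with h | h | h <;> omega
  have hvuy : G.dist v y ≤ G.dist v u + G.dist u y := huv.symm.reachable.dist_triangle_left y
  rw [dist_eq_one_iff_adj.mpr huv.symm] at hvuy
  rcases hxy.diff_dist_adj (u := u) with h | h | h <;> omega

section Counting

variable [DecidableRel G.Adj]

theorem degree_le_card_bipartiteAbove_edgeLayer_succ {i : ℕ} (huv : G.Adj u v)
    (hx : x ∈ G.edgeLayer u v i) (hg : ((2 * i + 3 : ℕ) : ℕ∞) < G.egirth) :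
    G.degree x ≤ #((G.edgeLayer u v (i + 1)).bipartiteAbove G.Adj x) + 1 := by
  classical
  have hvx : G.dist v x = i + 1 := (mem_edgeLayer.mp hx).2
  set parents := (G.neighborFinset x).filter fun y => G.dist v y < G.dist v x
  have hparents : #parents ≤ 1 := card_le_one.mpr fun y hy y' hy' => by
    simp only [parents, mem_filter, mem_neighborFinset] at hy hy'
    exact eq_of_adj_of_dist_lt_of_lt_egirth hy.1.symm hy'.1.symm hy.2 hy'.2
      (lt_of_le_of_lt (by rw [hvx]; norm_cast; omega) hg)
  have hsub :
      G.neighborFinset x ⊆ (G.edgeLayer u v (i + 1)).bipartiteAbove G.Adj x ∪ parents := by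
    intro y hy
    rw [mem_neighborFinset] at hy
    by_cases hvy : G.dist v y < G.dist v x
    · exact mem_union_right _ (mem_filter.mpr ⟨(mem_neighborFinset ..).mpr hy, hvy⟩)
    · exact mem_union_left _ ((mem_bipartiteAbove _).mpr
        ⟨mem_edgeLayer_succ_of_adj huv hx hy (not_lt.mp hvy) hg, hy⟩)
  calc G.degree x = #(G.neighborFinset x) := (card_neighborFinset_eq_degree ..).symm
    _ ≤ #((G.edgeLayer u v (i + 1)).bipartiteAbove G.Adj x ∪ parents) := card_le_card hsub
    _ ≤ _ := (card_union_le _ _).trans (by omega)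

theorem card_bipartiteBelow_edgeLayer_le_one {i : ℕ} (hy : y ∈ G.edgeLayer u v (i + 1))
    (hg : ((2 * i + 2 : ℕ) : ℕ∞) < G.egirth) :
    #((G.edgeLayer u v i).bipartiteBelow G.Adj y) ≤ 1 := by
  have huy : G.dist u y = i + 1 := (mem_edgeLayer.mp hy).1
  refine card_le_one.mpr fun x hx x' hx' => ?_
  rw [mem_bipartiteBelow, mem_edgeLayer] at hx hx'
  exact eq_of_adj_of_dist_lt_of_lt_egirth (u := u) hx.2 hx'.2 (by omega) (by omega)
    (by rwa [huy, mul_add, mul_one])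

theorem pow_le_card_edgeLayer {k : ℕ} (huv : G.Adj u v) (hdeg : ∀ x, k ≤ G.degree x) :
    ∀ {i : ℕ}, ((2 * i + 1 : ℕ) : ℕ∞) < G.egirth → (k - 1) ^ i ≤ #(G.edgeLayer u v i)
  | 0, _ => by simp [edgeLayer_zero huv]
  | i + 1, hg => by
    have ih := pow_le_card_edgeLayer huv hdeg (i := i) (lt_of_le_of_lt (by norm_cast; omega) hg)
    calc (k - 1) ^ (i + 1) = (k - 1) ^ i * (k - 1) := pow_succ ..
      _ ≤ #(G.edgeLayer u v i) * (k - 1) := Nat.mul_le_mul_right _ ih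
      _ ≤ #(G.edgeLayer u v (i + 1)) * 1 := card_mul_le_card_mul G.Adj
          (fun x hx => by
            have := degree_le_card_bipartiteAbove_edgeLayer_succ huv hx
              (by convert hg using 2; omega)
            have := hdeg x
            omega)
          (fun y hy => card_bipartiteBelow_edgeLayer_le_one hy
            (lt_of_le_of_lt (by norm_cast; omega) hg))
      _ = _ := mul_one _

theorem two_mul_sum_pow_le_card {k r : ℕ} (huv : G.Adj u v) (hdeg : ∀ x, k ≤ G.degree x)
    (hg : ((2 * r : ℕ) : ℕ∞) ≤ G.egirth) :
    2 * ∑ i ∈ range r, (k - 1) ^ i ≤ Fintype.card V := by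
  classical
  have hlayer (i) (hi : i ∈ range r) :
      (k - 1) ^ i + (k - 1) ^ i ≤ #(G.edgeLayer u v i ∪ G.edgeLayer v u i) := by
    have hgi : ((2 * i + 1 : ℕ) : ℕ∞) < G.egirth :=
      lt_of_lt_of_le (by have := mem_range.mp hi; norm_cast; omega) hg
    rw [card_union_of_disjoint (disjoint_edgeLayer_swap i i)]
    exact add_le_add (pow_le_card_edgeLayer huv hdeg hgi) (pow_le_card_edgeLayer huv.symm hdeg hgi)
  calc 2 * ∑ i ∈ range r, (k - 1) ^ i = ∑ i ∈ range r, ((k - 1) ^ i + (k - 1) ^ i) := by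
        rw [two_mul, sum_add_distrib]
    _ ≤ ∑ i ∈ range r, #(G.edgeLayer u v i ∪ G.edgeLayer v u i) := sum_le_sum hlayer
    _ = #((range r).biUnion fun i => G.edgeLayer u v i ∪ G.edgeLayer v u i) :=
        (card_biUnion fun _ _ _ _ => disjoint_edgeLayer_union_of_ne).symm
    _ ≤ Fintype.card V := card_le_univ _

end Counting

end SimpleGraph

theorem moore_bound_even_girth_general {V : Type*} [Fintype V] [Nonempty V] (G : SimpleGraph V)
    [DecidableRel G.Adj] (k r : ℕ) (hk : 2 ≤ k)
    (hreg : ∀ v : V, G.degree v = k) (hg : ((2 * r : ℕ) : ℕ∞) ≤ G.girth) :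
    2 * ∑ i ∈ Finset.range r, (k - 1) ^ i ≤ Fintype.card V := by
  obtain ⟨u⟩ := ‹Nonempty V›
  obtain ⟨v, huv⟩ := G.degree_pos_iff_exists_adj u |>.mp (by rw [hreg u]; omega)
  exact G.two_mul_sum_pow_le_card huv (fun x => (hreg x).ge)
    (hg.trans (ENat.natCast_toNat_le_self _))

/-- Even-girth Moore bound: a `k`-regular graph (`k ≥ 2`) of girth at least `2r`
(`r ≥ 1`) has at least `2·∑_{i=0}^{r-1} (k-1)^i` vertices. -/
theorem moore_bound_even_girth {V : Type*} [Fintype V] [Nonempty V] (G : SimpleGraph V)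
    [DecidableRel G.Adj] (k r : ℕ) (hk : 2 ≤ k) (hr : 1 ≤ r)
    (hreg : ∀ v : V, G.degree v = k) (hg : ((2 * r : ℕ) : ℕ∞) ≤ G.girth) :
    2 * ∑ i ∈ Finset.range r, (k - 1) ^ i ≤ Fintype.card V :=
  moore_bound_even_girth_general G k r hk hreg hg
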